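/- arXiv:math/9908149 — 6 statements merged into one kernel-verified Lean document; each statement's English description precedes it below -/
import Mathlib

section
/- Let f(x) = (x - ζ₁) g(x) be a complex polynomial of degree d, where g has degree d - 1. Then ‖g‖_{d-1} ≤ √(d / (1 + |ζ₁|²)) · ‖f‖_d, where ‖·‖_m denotes the Weyl (Bombieri) norm on polynomials of degree at most m, defined by ‖p‖_m² = Σ_{i=0}^{m} |pᵢ|² / C(m, i). -/
open Polynomial Finset

/-!
Put `d = m + 1`, `r = |ζ₁|`, `s_j = |g_j|`. Since `f₀ = -ζ₁ g₀`, `f_{j+1} = g_j - ζ₁ g_{j+1}` and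
`C(m+1, j+1) = (m+1)/(j+1) · C(m, j)`, the reverse triangle inequality bounds `d ‖f‖_d²` below by
`(m+1) r² s₀² + ∑_{j ≤ m} (j+1)(s_j - r s_{j+1})² / C(m,j)`. Each summand exceeds
`(1 + r²) s_j² / C(m,j)` by at least `Φ_{j+1} - Φ_j`, where `Φ_k = (r²(m+1-k) - k) s_k² / C(m,k)`:
the difference is `(r(m-j) s_j - (j+1) s_{j+1})² / ((m-j) C(m,j))`. The corrections telescope to
`Φ_{m+1} - Φ₀ = -(m+1) r² s₀²`, leaving `(1 + r²) ‖g‖_{d-1}² ≤ d ‖f‖_d²`.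
-/

/-- The Weyl (Bombieri) norm on polynomials of degree at most `m`:
`‖p‖_m = √(∑_{i=0}^m |pᵢ|²/C(m,i))`. -/
noncomputable def weylNorm (m : ℕ) (p : Polynomial ℂ) : ℝ :=
  Real.sqrt (∑ i ∈ Finset.range (m + 1), ‖p.coeff i‖ ^ 2 / (Nat.choose m i))

noncomputable def weylNormSq (m : ℕ) (p : ℂ[X]) : ℝ :=
  ∑ i ∈ range (m + 1), ‖p.coeff i‖ ^ 2 / m.choose i

lemma weylNorm_eq_sqrt_weylNormSq (m : ℕ) (p : ℂ[X]) : weylNorm m p = √(weylNormSq m p) := rfl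

lemma add_one_div_choose_add_one (m j : ℕ) :
    ((m : ℝ) + 1) / (m + 1).choose (j + 1) = (j + 1) / m.choose j := by
  rcases le_or_gt j m with hj | hj
  · have hc : (0 : ℝ) < m.choose j := by exact_mod_cast Nat.choose_pos hj
    have hc' : (0 : ℝ) < (m + 1).choose (j + 1) := by exact_mod_cast Nat.choose_pos (by omega)
    rw [div_eq_div_iff hc'.ne' hc.ne', mul_comm (j + 1 : ℝ)]
    exact_mod_cast Nat.add_one_mul_choose_eq m j
  · simp [Nat.choose_eq_zero_of_lt hj, Nat.choose_eq_zero_of_lt (Nat.succ_lt_succ hj)]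

lemma cast_choose_succ_right_eq {m j : ℕ} (hj : j ≤ m) :
    (m.choose (j + 1) : ℝ) = m.choose j * (m - j) / (j + 1) := by
  rw [eq_div_iff (by positivity), ← Nat.cast_sub hj]
  exact_mod_cast Nat.choose_succ_right_eq m j

lemma add_one_mul_weylNormSq_add_one (m : ℕ) (f : ℂ[X]) :
    (m + 1) * weylNormSq (m + 1) f = (m + 1) * ‖f.coeff 0‖ ^ 2 +
      ∑ j ∈ range (m + 1), (j + 1) * ‖f.coeff (j + 1)‖ ^ 2 / m.choose j := by
  rw [weylNormSq, mul_sum, sum_range_succ', add_comm]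
  congr 1
  · simp
  · refine sum_congr rfl fun j _ => ?_
    rw [mul_div_left_comm, add_one_div_choose_add_one]
    ring

lemma sq_div_choose_add_sub_le {m j : ℕ} (hj : j < m) (r x y : ℝ) :
    (1 + r ^ 2) * x ^ 2 / m.choose j
        + ((r ^ 2 * (m - j) - (j + 1)) * y ^ 2 / m.choose (j + 1)
          - (r ^ 2 * (m + 1 - j) - j) * x ^ 2 / m.choose j)
      ≤ (j + 1) * (x - r * y) ^ 2 / m.choose j := by
  have hc : (0 : ℝ) < m.choose j := by exact_mod_cast Nat.choose_pos hj.le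
  have hmj : (0 : ℝ) < m - j := sub_pos.mpr (by exact_mod_cast hj)
  have defect : (j + 1) * (x - r * y) ^ 2 / m.choose j - ((1 + r ^ 2) * x ^ 2 / m.choose j
        + ((r ^ 2 * (m - j) - (j + 1)) * y ^ 2 / m.choose (j + 1)
          - (r ^ 2 * (m + 1 - j) - j) * x ^ 2 / m.choose j))
      = (r * (m - j) * x - (j + 1) * y) ^ 2 / ((m - j) * m.choose j) := by
    rw [cast_choose_succ_right_eq hj.le]
    field_simp
    ring
  have := div_nonneg (sq_nonneg (r * (m - j) * x - (j + 1) * y)) (mul_pos hmj hc).le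
  linarith

lemma sq_norm_sub_mul_norm_le (a b ζ : ℂ) : (‖a‖ - ‖ζ‖ * ‖b‖) ^ 2 ≤ ‖a - ζ * b‖ ^ 2 := by
  rw [← norm_mul, ← sq_abs]
  exact pow_le_pow_left₀ (abs_nonneg _) (abs_norm_sub_norm_le _ _) 2

lemma one_add_sq_norm_mul_weylNormSq_le {m : ℕ} {g : ℂ[X]} (hg : g.natDegree ≤ m) (ζ : ℂ) :
    (1 + ‖ζ‖ ^ 2) * weylNormSq m g ≤ (m + 1) * weylNormSq (m + 1) ((X - C ζ) * g) := by
  set r := ‖ζ‖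
  set Φ : ℕ → ℝ := fun k => (r ^ 2 * (m + 1 - k) - k) * ‖g.coeff k‖ ^ 2 / m.choose k
  have step : ∀ j ∈ range (m + 1), (1 + r ^ 2) * ‖g.coeff j‖ ^ 2 / m.choose j + (Φ (j + 1) - Φ j)
      ≤ (j + 1) * ‖((X - C ζ) * g).coeff (j + 1)‖ ^ 2 / m.choose j := by
    intro j hj
    rw [coeff_X_sub_C_mul]
    rcases (mem_range_succ_iff.mp hj).lt_or_eq with hj | rfl
    · have hΦj : Φ (j + 1) - Φ j =
          (r ^ 2 * (m - j) - (j + 1)) * ‖g.coeff (j + 1)‖ ^ 2 / m.choose (j + 1)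
            - (r ^ 2 * (m + 1 - j) - j) * ‖g.coeff j‖ ^ 2 / m.choose j := by
        simp only [Φ]; push_cast; ring
      calc _ ≤ (j + 1) * (‖g.coeff j‖ - r * ‖g.coeff (j + 1)‖) ^ 2 / m.choose j :=
            hΦj ▸ sq_div_choose_add_sub_le hj r _ _
        _ ≤ _ := by gcongr (_ + 1) * ?_ / _; exact sq_norm_sub_mul_norm_le _ _ _
    · simp [Φ, coeff_eq_zero_of_natDegree_lt (Nat.lt_succ_of_le hg)]
      exact le_of_eq (by ring)
  have hΦ₀ : Φ 0 = (m + 1) * r ^ 2 * ‖g.coeff 0‖ ^ 2 := by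
    simp only [Φ, Nat.cast_zero, Nat.choose_zero_right, Nat.cast_one]; ring
  -- `m.choose (m + 1) = 0`, and division by zero gives `0`.
  have hΦ : Φ (m + 1) = 0 := by simp [Φ]
  have hf₀ : ((X - C ζ) * g).coeff 0 = -ζ * g.coeff 0 := by simp [mul_coeff_zero]
  calc (1 + r ^ 2) * weylNormSq m g
      = ∑ j ∈ range (m + 1), ((1 + r ^ 2) * ‖g.coeff j‖ ^ 2 / m.choose j + (Φ (j + 1) - Φ j))
        + (m + 1) * ‖((X - C ζ) * g).coeff 0‖ ^ 2 := by
        rw [sum_add_distrib, sum_range_sub, hΦ, hΦ₀, hf₀, weylNormSq, mul_sum, norm_mul, norm_neg]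
        simp only [mul_div_assoc]
        ring
    _ ≤ ∑ j ∈ range (m + 1), (j + 1) * ‖((X - C ζ) * g).coeff (j + 1)‖ ^ 2 / m.choose j
        + (m + 1) * ‖((X - C ζ) * g).coeff 0‖ ^ 2 := by
        gcongr ?_ + _
        exact sum_le_sum step
    _ = (m + 1) * weylNormSq (m + 1) ((X - C ζ) * g) := by
        rw [add_one_mul_weylNormSq_add_one, add_comm]

/-- If `f = (x - ζ₁) g` has degree `d` and `g` has degree `d - 1`, then
`‖g‖_{d-1} ≤ √(d/(1+|ζ₁|²)) ‖f‖_d`. -/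
theorem weylNorm_factor_le (d : ℕ) (hd : 1 ≤ d) (ζ₁ : ℂ) (f g : Polynomial ℂ)
    (hf : f = (X - C ζ₁) * g) (hgdeg : g.natDegree = d - 1) :
    weylNorm (d - 1) g ≤
      Real.sqrt ((d : ℝ) / (1 + ‖ζ₁‖ ^ 2)) * weylNorm d f := by
  obtain ⟨m, rfl⟩ := Nat.exists_eq_add_of_le' hd
  rw [Nat.add_sub_cancel] at hgdeg ⊢
  rw [weylNorm_eq_sqrt_weylNormSq, weylNorm_eq_sqrt_weylNormSq, ← Real.sqrt_mul (by positivity)]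
  refine Real.sqrt_le_sqrt ?_
  rw [div_mul_eq_mul_div, le_div_iff₀ (by positivity), mul_comm, hf]
  push_cast
  exact one_add_sq_norm_mul_weylNormSq_le hgdeg.le ζ₁
end

section
/- Let f(x) = (x - ζ₁) g(x) be a complex polynomial of degree d with g of degree d - 1. Then ‖g‖_d ≤ (√d / √(1 + |ζ₁|²)) · ‖f‖_d, where ‖·‖_d is the Weyl norm on polynomials of degree at most d. -/
open Polynomial Finset

/-!
Write `d = n + 1`, `e j = |g_j|² / C(n, j)` and `f_{i+1} = g_i - ζ g_{i+1}`. The Weyl weight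
`d / C(d, i+1)` equals both `(i+1) / C(n, i)` and `(n-i) / C(n, i+1)`, so completing a square gives
`d |f_{i+1}|² / C(d, i+1) ≥ φ_i (e_i - e_{i+1})` with `φ_i = (i+1) - |ζ|² (n-i)`. As `φ` grows by
`1 + |ζ|²` at each step, summation by parts yields `d ‖f‖_d² ≥ (1 + |ζ|²) ‖g‖_{d-1}²`, and
`‖g‖_d ≤ ‖g‖_{d-1}` because binomial coefficients grow with the degree.
-/

lemma weylNorm_nonneg (m : ℕ) (p : ℂ[X]) : 0 ≤ weylNorm m p :=
  Real.sqrt_nonneg _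

lemma weylNorm_sq (m : ℕ) (p : ℂ[X]) :
    weylNorm m p ^ 2 = ∑ i ∈ range (m + 1), ‖p.coeff i‖ ^ 2 / m.choose i :=
  Real.sq_sqrt (sum_nonneg fun _ _ => by positivity)

lemma weylNorm_le_of_natDegree_le {m n : ℕ} (hmn : m ≤ n) {p : ℂ[X]} (hp : p.natDegree ≤ m) :
    weylNorm n p ≤ weylNorm m p := by
  have hsupp : ∑ i ∈ range (n + 1), ‖p.coeff i‖ ^ 2 / n.choose i
      = ∑ i ∈ range (m + 1), ‖p.coeff i‖ ^ 2 / n.choose i := by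
    refine (sum_subset (range_subset_range.2 (by omega)) fun i _ hi => ?_).symm
    rw [coeff_eq_zero_of_natDegree_lt (by rw [mem_range] at hi; omega)]
    simp
  refine Real.sqrt_le_sqrt ?_
  rw [hsupp]
  refine sum_le_sum fun i hi => div_le_div_of_nonneg_left (by positivity) ?_ ?_
  · exact_mod_cast Nat.choose_pos (by rw [mem_range] at hi; omega)
  · exact_mod_cast Nat.choose_le_choose i hmn

lemma mul_sub_div_le_norm_sub_mul_sq {c c' : ℝ} (hc : 0 < c) (hc' : 0 < c') (x y ζ : ℂ) :
    (c - ‖ζ‖ ^ 2 * c') * (‖x‖ ^ 2 / c - ‖y‖ ^ 2 / c') ≤ ‖x - ζ * y‖ ^ 2 := by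
  have key : ‖x - ζ * y‖ ^ 2 - (c - ‖ζ‖ ^ 2 * c') * (‖x‖ ^ 2 / c - ‖y‖ ^ 2 / c')
      = ‖(c : ℂ) * y - c' * (starRingEnd ℂ ζ) * x‖ ^ 2 / (c * c') := by
    simp only [← Complex.normSq_eq_norm_sq, Complex.normSq_apply]
    simp only [Complex.sub_re, Complex.mul_re, Complex.sub_im, Complex.mul_im, Complex.ofReal_re,
      Complex.ofReal_im, Complex.conj_re, Complex.conj_im]
    field_simp
    ring
  have : 0 ≤ ‖(c : ℂ) * y - c' * (starRingEnd ℂ ζ) * x‖ ^ 2 / (c * c') := by positivity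
  linarith

lemma sum_range_mul_sub_succ {φ u : ℕ → ℝ} {κ : ℝ} (hφ : ∀ i, φ (i + 1) = φ i + κ) (N : ℕ) :
    ∑ i ∈ range (N + 1), φ i * (u i - u (i + 1)) =
      φ 0 * u 0 - φ N * u (N + 1) + κ * ∑ i ∈ range N, u (i + 1) := by
  induction N with
  | zero => rw [zero_add, sum_range_one, range_zero, sum_empty]; ring
  | succ N ih =>
    rw [sum_range_succ, ih, sum_range_succ, hφ]
    ring

lemma le_weight_mul_norm_coeff_X_sub_C_mul_succ (ζ : ℂ) {g : ℂ[X]} {n : ℕ}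
    (hg : g.natDegree ≤ n) {i : ℕ} (hi : i ≤ n) :
    ((i + 1 : ℝ) - ‖ζ‖ ^ 2 * (n - i)) *
        (‖g.coeff i‖ ^ 2 / n.choose i - ‖g.coeff (i + 1)‖ ^ 2 / n.choose (i + 1)) ≤
      (n + 1) / (n + 1).choose (i + 1) * ‖((X - C ζ) * g).coeff (i + 1)‖ ^ 2 := by
  rw [coeff_X_sub_C_mul]
  set w : ℝ := (n + 1) / (n + 1).choose (i + 1)
  have hw : 0 < ((n + 1).choose (i + 1) : ℝ) := by exact_mod_cast Nat.choose_pos (by omega)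
  have hwc : w * n.choose i = i + 1 := by
    rw [div_mul_eq_mul_div, div_eq_iff hw.ne', mul_comm (i + 1 : ℝ)]
    exact_mod_cast Nat.add_one_mul_choose_eq n i
  rcases hi.lt_or_eq with hi | rfl
  · have hwc' : w * n.choose (i + 1) = n - i := by
      rw [div_mul_eq_mul_div, div_eq_iff hw.ne', mul_comm _ (n.choose (i + 1) : ℝ),
        mul_comm (_ - _ : ℝ), ← Nat.cast_sub hi.le]
      have := Nat.choose_mul_succ_eq n (i + 1)
      rw [show n + 1 - (i + 1) = n - i by omega] at this
      exact_mod_cast this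
    calc ((i + 1 : ℝ) - ‖ζ‖ ^ 2 * (n - i)) *
          (‖g.coeff i‖ ^ 2 / n.choose i - ‖g.coeff (i + 1)‖ ^ 2 / n.choose (i + 1))
        = w * ((n.choose i - ‖ζ‖ ^ 2 * n.choose (i + 1)) *
          (‖g.coeff i‖ ^ 2 / n.choose i - ‖g.coeff (i + 1)‖ ^ 2 / n.choose (i + 1))) := by
          rw [← hwc, ← hwc']; ring
      _ ≤ w * ‖g.coeff i - ζ * g.coeff (i + 1)‖ ^ 2 :=
          mul_le_mul_of_nonneg_left
            (mul_sub_div_le_norm_sub_mul_sq (by exact_mod_cast Nat.choose_pos (by omega))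
              (by exact_mod_cast Nat.choose_pos hi) _ _ _)
            (by positivity)
  · rw [coeff_eq_zero_of_natDegree_lt (n := i + 1) (by omega), Nat.choose_succ_self, ← hwc]
    simp

theorem one_add_norm_sq_mul_weylNorm_sq_le (ζ : ℂ) {g : ℂ[X]} {n : ℕ} (hg : g.natDegree ≤ n) :
    (1 + ‖ζ‖ ^ 2) * weylNorm n g ^ 2 ≤ (n + 1) * weylNorm (n + 1) ((X - C ζ) * g) ^ 2 := by
  set e : ℕ → ℝ := fun j => ‖g.coeff j‖ ^ 2 / n.choose j
  set φ : ℕ → ℝ := fun i => (i + 1 : ℝ) - ‖ζ‖ ^ 2 * (n - i)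
  have htel := sum_range_mul_sub_succ (φ := φ) (u := e) (κ := 1 + ‖ζ‖ ^ 2)
    (fun i => by simp only [φ]; push_cast; ring) n
  -- `n.choose (n + 1) = 0`, so this is the junk value `x / 0 = 0`
  have he : e (n + 1) = 0 := by simp [e]
  have hcoeff0 : ‖((X - C ζ) * g).coeff 0‖ ^ 2 = ‖ζ‖ ^ 2 * e 0 := by simp [e, sub_mul, mul_pow]
  rw [weylNorm_sq, weylNorm_sq, sum_range_succ' _ (n + 1), mul_add]
  calc (1 + ‖ζ‖ ^ 2) * ∑ j ∈ range (n + 1), e j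
      = ∑ i ∈ range (n + 1), φ i * (e i - e (i + 1)) + (n + 1) * (‖ζ‖ ^ 2 * e 0) := by
        rw [htel, he, sum_range_succ']
        simp only [φ]
        push_cast
        ring
    _ ≤ _ := by
        rw [mul_sum]
        refine add_le_add (sum_le_sum fun i hi => ?_) ?_
        · rw [mul_div_assoc', ← div_mul_eq_mul_div]
          exact le_weight_mul_norm_coeff_X_sub_C_mul_succ ζ hg (Nat.lt_succ_iff.1 (mem_range.1 hi))
        · rw [Nat.choose_zero_right, Nat.cast_one, div_one, hcoeff0]

/-- If `f = (x - ζ₁) g` has degree `d` with `deg g = d - 1`, then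
`‖g‖_d ≤ (√d / √(1+|ζ₁|²)) ‖f‖_d`. -/
theorem weylNorm_factor_le_same_degree (d : ℕ) (hd : 1 ≤ d) (ζ₁ : ℂ)
    (f g : Polynomial ℂ)
    (hf : f = (X - C ζ₁) * g) (hgdeg : g.natDegree = d - 1) :
    weylNorm d g ≤
      (Real.sqrt d / Real.sqrt (1 + ‖ζ₁‖ ^ 2)) * weylNorm d f := by
  obtain ⟨n, rfl⟩ : ∃ n, d = n + 1 := ⟨d - 1, by omega⟩
  rw [Nat.add_sub_cancel] at hgdeg
  have hsq := one_add_norm_sq_mul_weylNorm_sq_le ζ₁ hgdeg.le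
  rw [← hf] at hsq
  have hpos : 0 < 1 + ‖ζ₁‖ ^ 2 := by positivity
  calc weylNorm (n + 1) g ≤ weylNorm n g := weylNorm_le_of_natDegree_le n.le_succ hgdeg.le
    _ ≤ Real.sqrt ↑(n + 1) / Real.sqrt (1 + ‖ζ₁‖ ^ 2) * weylNorm (n + 1) f := by
      rw [← pow_le_pow_iff_left₀ (weylNorm_nonneg n g)
        (mul_nonneg (by positivity) (weylNorm_nonneg _ _)) two_ne_zero,
        mul_pow, div_pow, Real.sq_sqrt (by positivity), Real.sq_sqrt hpos.le, div_mul_eq_mul_div,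
        le_div_iff₀ hpos]
      push_cast
      linarith
end

section
/- The Weyl norm is invariant under the unitary action: if φ = [[α, β], [γ, δ]] is a 2×2 unitary matrix and f is a degree-d complex polynomial, define f^φ(y) = (γy + δ)^d f((αy + β)/(γy + δ)) (expanded as a polynomial of degree at most d); then ‖f^φ‖_d = ‖f‖_d. -/
open Polynomial Finset

/-- The action of a 2×2 matrix `[[α,β],[γ,δ]]` on a polynomial of degree at most `d`:
`f^φ(y) = (γy+δ)^d f((αy+β)/(γy+δ))`, expanded as a polynomial, i.e.
`f^φ = ∑ᵢ fᵢ (αY+β)ⁱ (γY+δ)^{d-i}`. -/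
noncomputable def unitaryAction (d : ℕ) (α β γ δ : ℂ) (f : Polynomial ℂ) :
    Polynomial ℂ :=
  ∑ i ∈ Finset.range (d + 1),
    C (f.coeff i) * (C α * X + C β) ^ i * (C γ * X + C δ) ^ (d - i)

/-!
With respect to the Weyl inner product `⟨p, q⟩ = ∑ₖ pₖ conj(qₖ) / C(d,k)`, the adjoint of
`f ↦ f^φ` is `f ↦ f^{φ*}`. Indeed, `C(d,i)` times the coefficient of `Xᵏ` in
`(αX+β)ⁱ(γX+δ)^{d-i}` is the coefficient of `XᵏYⁱ` in `(αXY + βY + γX + δ)^d`, which is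
symmetric under `X ↔ Y`, `β ↔ γ`. Moreover `f^φ` is the dehomogenization of the binary form
`F(φ (x, y))`, where `F` is the degree-`d` homogenization of `f`, so `(f^φ)^ψ = f^{φψ}`.
Hence `‖f^φ‖² = ⟨f, (f^φ)^{φ*}⟩ = ⟨f, f^{φφ*}⟩ = ‖f‖²`.
-/

theorem Polynomial.coeff_X_mul_C_add_C_pow {R : Type*} [CommSemiring R] (a b : R) (n k : ℕ) :
    ((X * C a + C b) ^ n).coeff k = n.choose k * a ^ k * b ^ (n - k) := by
  rw [add_pow, finsetSum_coeff]
  simp_rw [mul_pow, ← C_pow, ← C_eq_natCast, mul_assoc, ← C_mul, coeff_X_pow_mul', coeff_C]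
  rw [Finset.sum_eq_single k]
  · simp only [le_refl, ↓reduceIte, tsub_self]
    ring
  · intro m _ hm
    split_ifs <;> first | rfl | omega
  · intro hk
    simp [Nat.choose_eq_zero_of_lt (by simpa using hk : n < k)]

namespace Polynomial.Bivariate

theorem coeff_coeff_swap {R : Type*} [CommSemiring R] (P : R[X][Y]) (i k : ℕ) :
    ((swap P).coeff i).coeff k = (P.coeff k).coeff i := by
  induction P using Polynomial.induction_on' with
  | add P Q hP hQ => simp [hP, hQ]
  | monomial n q =>
    rw [swap_monomial, coeff_mul_C, coeff_map, coeff_C_mul_X_pow, coeff_monomial]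
    split_ifs <;> simp_all [eq_comm]

end Polynomial.Bivariate

open Polynomial.Bivariate in
theorem choose_mul_coeff_pow_mul_pow_comm {R : Type*} [CommSemiring R] (a b c e : R)
    (d i k : ℕ) :
    (d.choose i : R) * ((C a * X + C b) ^ i * (C c * X + C e) ^ (d - i)).coeff k =
      (d.choose k : R) * ((C a * X + C c) ^ k * (C b * X + C e) ^ (d - k)).coeff i := by
  have coeff_coeff_pow : ∀ a b c e : R, ∀ i k : ℕ,
      (((Y * C (C a * X + C b) + C (C c * X + C e)) ^ d).coeff i).coeff k =
        (d.choose i : R) * ((C a * X + C b) ^ i * (C c * X + C e) ^ (d - i)).coeff k := by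
    intro a b c e i k
    rw [coeff_X_mul_C_add_C_pow, mul_assoc, coeff_natCast_mul]
  have swap_pow : swap ((Y * C (C a * X + C b) + C (C c * X + C e)) ^ d : R[X][Y]) =
      (Y * C (C a * X + C c) + C (C b * X + C e)) ^ d := by
    simp only [map_add, map_mul, map_pow, swap_Y, swap_C, Polynomial.map_C, Polynomial.map_X]
    ring
  rw [← coeff_coeff_pow, ← coeff_coeff_pow, ← swap_pow, coeff_coeff_swap]

theorem Polynomial.aeval_homogenize {R A : Type*} [CommSemiring R] [CommSemiring A]
    [Algebra R A] (u : Fin 2 → A) (p : R[X]) (n : ℕ) :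
    MvPolynomial.aeval u (p.homogenize n) =
      ∑ k ∈ range (n + 1), algebraMap R A (p.coeff k) * u 0 ^ k * u 1 ^ (n - k) := by
  rw [homogenize, map_sum, Nat.sum_antidiagonal_eq_sum_range_succ_mk]
  simp [MvPolynomial.aeval_monomial, Finsupp.prod_fintype, mul_assoc]

section RowForm

variable {R : Type*} [CommSemiring R]

noncomputable def rowForm (φ : Matrix (Fin 2) (Fin 2) R) (i : Fin 2) :
    MvPolynomial (Fin 2) R :=
  ∑ j, MvPolynomial.C (φ i j) * MvPolynomial.X j

theorem isHomogeneous_bind₁_rowForm (φ : Matrix (Fin 2) (Fin 2) R)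
    {H : MvPolynomial (Fin 2) R} {n : ℕ} (hH : H.IsHomogeneous n) :
    (MvPolynomial.bind₁ (rowForm φ) H).IsHomogeneous n := by
  simpa using hH.aeval (rowForm φ) fun i =>
    MvPolynomial.IsHomogeneous.sum _ _ _ fun j _ => MvPolynomial.isHomogeneous_C_mul_X _ j

theorem bind₁_rowForm_rowForm (φ ψ : Matrix (Fin 2) (Fin 2) R) (i : Fin 2) :
    MvPolynomial.bind₁ (rowForm ψ) (rowForm φ i) = rowForm (φ * ψ) i := by
  simp only [rowForm, Fin.sum_univ_two, map_add, map_mul, MvPolynomial.algHom_C,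
    MvPolynomial.algebraMap_eq, MvPolynomial.bind₁_X_right, Matrix.mul_apply]
  ring

theorem rowForm_one : rowForm (1 : Matrix (Fin 2) (Fin 2) R) = MvPolynomial.X := by
  ext1 i
  simp [rowForm, Matrix.one_apply, apply_ite MvPolynomial.C]

end RowForm

noncomputable def matrixAction (d : ℕ) (φ : Matrix (Fin 2) (Fin 2) ℂ) (f : ℂ[X]) : ℂ[X] :=
  unitaryAction d (φ 0 0) (φ 0 1) (φ 1 0) (φ 1 1) f

theorem coeff_matrixAction (d : ℕ) (φ : Matrix (Fin 2) (Fin 2) ℂ) (f : ℂ[X]) (k : ℕ) :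
    (matrixAction d φ f).coeff k = ∑ i ∈ range (d + 1), f.coeff i *
      ((C (φ 0 0) * X + C (φ 0 1)) ^ i * (C (φ 1 0) * X + C (φ 1 1)) ^ (d - i)).coeff k := by
  simp only [matrixAction, unitaryAction, finsetSum_coeff, mul_assoc, coeff_C_mul]

theorem matrixAction_eq_aeval_bind₁ (d : ℕ) (φ : Matrix (Fin 2) (Fin 2) ℂ) (f : ℂ[X]) :
    matrixAction d φ f =
      MvPolynomial.aeval ![X, 1] (MvPolynomial.bind₁ (rowForm φ) (f.homogenize d)) := by
  rw [MvPolynomial.aeval_bind₁, aeval_homogenize]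
  simp [matrixAction, unitaryAction, rowForm, Fin.sum_univ_two]

theorem homogenize_matrixAction (d : ℕ) (φ : Matrix (Fin 2) (Fin 2) ℂ) (f : ℂ[X]) :
    (matrixAction d φ f).homogenize d = MvPolynomial.bind₁ (rowForm φ) (f.homogenize d) :=
  homogenize_eq_of_isHomogeneous (isHomogeneous_bind₁_rowForm φ (isHomogeneous_homogenize f))
    (matrixAction_eq_aeval_bind₁ d φ f).symm

theorem matrixAction_matrixAction (d : ℕ) (φ ψ : Matrix (Fin 2) (Fin 2) ℂ) (f : ℂ[X]) :
    matrixAction d ψ (matrixAction d φ f) = matrixAction d (φ * ψ) f := by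
  rw [matrixAction_eq_aeval_bind₁, homogenize_matrixAction, MvPolynomial.bind₁_bind₁,
    matrixAction_eq_aeval_bind₁]
  simp only [bind₁_rowForm_rowForm]

theorem matrixAction_one {d : ℕ} {f : ℂ[X]} (hf : f.natDegree ≤ d) : matrixAction d 1 f = f := by
  rw [matrixAction_eq_aeval_bind₁, rowForm_one, MvPolynomial.bind₁_X_left, AlgHom.id_apply,
    aeval_homogenize_X_one f hf]

open ComplexConjugate

noncomputable def weylInner (d : ℕ) (p q : ℂ[X]) : ℂ :=
  ∑ k ∈ range (d + 1), p.coeff k * conj (q.coeff k) / d.choose k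

theorem weylInner_self (d : ℕ) (p : ℂ[X]) : weylInner d p p = ((weylNorm d p ^ 2 : ℝ) : ℂ) := by
  rw [weylNorm, Real.sq_sqrt (by positivity)]
  push_cast
  simp [weylInner, Complex.mul_conj, Complex.normSq_eq_norm_sq]

theorem weylInner_matrixAction_left (d : ℕ) (φ : Matrix (Fin 2) (Fin 2) ℂ) (p q : ℂ[X]) :
    weylInner d (matrixAction d φ p) q = weylInner d p (matrixAction d (star φ) q) := by
  simp only [weylInner, coeff_matrixAction, map_sum, map_mul, sum_mul, mul_sum, sum_div]
  rw [sum_comm]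
  refine sum_congr rfl fun i hi => sum_congr rfl fun k hk => ?_
  have hsym := choose_mul_coeff_pow_mul_pow_comm (φ 0 0) (φ 0 1) (φ 1 0) (φ 1 1) d i k
  have hconj : conj (((C (star φ 0 0) * X + C (star φ 0 1)) ^ k *
      (C (star φ 1 0) * X + C (star φ 1 1)) ^ (d - k)).coeff i) =
      ((C (φ 0 0) * X + C (φ 1 0)) ^ k * (C (φ 0 1) * X + C (φ 1 1)) ^ (d - k)).coeff i := by
    rw [← coeff_map]
    simp [Matrix.star_apply]
  have hi0 : (d.choose i : ℂ) ≠ 0 :=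
    Nat.cast_ne_zero.mpr (Nat.choose_pos (Nat.lt_succ_iff.mp (mem_range.mp hi))).ne'
  have hk0 : (d.choose k : ℂ) ≠ 0 :=
    Nat.cast_ne_zero.mpr (Nat.choose_pos (Nat.lt_succ_iff.mp (mem_range.mp hk))).ne'
  rw [hconj]
  field_simp
  linear_combination (p.coeff i * conj (q.coeff k)) * hsym

/-- The Weyl norm is invariant under the action of unitary matrices. -/
theorem weylNorm_unitary_invariant (d : ℕ) (f : Polynomial ℂ)
    (hf : f.natDegree ≤ d) (φ : Matrix (Fin 2) (Fin 2) ℂ)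
    (hφ : φ ∈ Matrix.unitaryGroup (Fin 2) ℂ) :
    weylNorm d (unitaryAction d (φ 0 0) (φ 0 1) (φ 1 0) (φ 1 1) f) =
      weylNorm d f := by
  have hinner : weylInner d (matrixAction d φ f) (matrixAction d φ f) = weylInner d f f := by
    rw [weylInner_matrixAction_left, matrixAction_matrixAction, Matrix.mem_unitaryGroup_iff.mp hφ,
      matrixAction_one hf]
  rw [weylInner_self, weylInner_self, Complex.ofReal_inj] at hinner
  exact (pow_left_inj₀ (Real.sqrt_nonneg _) (Real.sqrt_nonneg _) two_ne_zero).mp hinner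
end

section
/- For fixed positive integers r ≤ d and k ≥ 0, let S_k be the set of strictly increasing multi-indices (i₁ < ... < i_r) with each iⱼ ∈ {1,...,d} and i₁ + ... + i_r - r(r+1)/2 = k. Then #S_{k+1} ≤ d · #S_k for all k ≥ 0 (with #S₀ = 1). -/
open Finset

lemma gauss (r : ℕ) : 2 * ∑ x ∈ Icc 1 r, x = r * (r + 1) := by
  induction r with
  | zero => simp
  | succ n ih =>
    rw [Finset.sum_Icc_succ_top (by omega)]
    ring_nf; ring_nf at ih; omega

/-- a downward-closed set of positive naturals is an initial segment -/
lemma nogap_eq_Icc : ∀ n (s : Finset ℕ), s.card = n → (∀ x ∈ s, 1 ≤ x) →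
    (∀ i ∈ s, i = 1 ∨ i - 1 ∈ s) → s = Icc 1 n := by
  intro n
  induction n with
  | zero => intro s hc _ _; simp [Finset.card_eq_zero.mp hc]
  | succ n ih =>
    intro s hc h1 hg
    have hne : s.Nonempty := Finset.card_pos.mp (by omega)
    set m := s.max' hne with hm
    have hms : m ∈ s := s.max'_mem hne
    have hsub : s ⊆ Icc 1 m := fun x hx =>
      Finset.mem_Icc.mpr ⟨h1 x hx, s.le_max' x hx⟩
    have hmge : n + 1 ≤ m := by
      have h2 := Finset.card_le_card hsub
      rw [Nat.card_Icc] at h2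
      omega
    have hce : (s.erase m).card = n := by
      rw [Finset.card_erase_of_mem hms, hc]; omega
    have h1' : ∀ x ∈ s.erase m, 1 ≤ x := fun x hx => h1 x (Finset.mem_of_mem_erase hx)
    have hg' : ∀ i ∈ s.erase m, i = 1 ∨ i - 1 ∈ s.erase m := by
      intro i hi
      have his : i ∈ s := Finset.mem_of_mem_erase hi
      rcases hg i his with h | h
      · exact Or.inl h
      · right
        refine Finset.mem_erase.mpr ⟨?_, h⟩
        have : i ≤ m := s.le_max' i his
        have : 1 ≤ i := h1 i his
        omega
    have heq : s.erase m = Icc 1 n := ih _ hce h1' hg'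
    have hmle : m ≤ n + 1 := by
      rcases hg m hms with h | h
      · omega
      · have : m - 1 ∈ s.erase m := Finset.mem_erase.mpr ⟨by omega, h⟩
        rw [heq, Finset.mem_Icc] at this
        omega
    have hmeq : m = n + 1 := le_antisymm hmle hmge
    have : s = insert m (s.erase m) := (Finset.insert_erase hms).symm
    rw [this, heq, hmeq]
    ext x
    simp [Finset.mem_Icc, Finset.mem_insert]
    omega

/-- minimal sum and equality case -/
lemma sum_lb : ∀ n (s : Finset ℕ), s.card = n → (∀ x ∈ s, 1 ≤ x) →
    n * (n + 1) ≤ 2 * ∑ x ∈ s, x ∧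
    (2 * ∑ x ∈ s, x = n * (n + 1) → s = Icc 1 n) := by
  intro n
  induction n with
  | zero => intro s hc _; simp [Finset.card_eq_zero.mp hc]
  | succ n ih =>
    intro s hc h1
    have hne : s.Nonempty := Finset.card_pos.mp (by omega)
    set m := s.max' hne with hm
    have hms : m ∈ s := s.max'_mem hne
    have hsub : s ⊆ Icc 1 m := fun x hx =>
      Finset.mem_Icc.mpr ⟨h1 x hx, s.le_max' x hx⟩
    have hmge : n + 1 ≤ m := by
      have h2 := Finset.card_le_card hsub
      rw [Nat.card_Icc] at h2
      omega
    have hce : (s.erase m).card = n := by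
      rw [Finset.card_erase_of_mem hms, hc]; omega
    have h1' : ∀ x ∈ s.erase m, 1 ≤ x := fun x hx => h1 x (Finset.mem_of_mem_erase hx)
    obtain ⟨ihle, ihEq⟩ := ih (s.erase m) hce h1'
    have hsum : ∑ x ∈ s, x = m + ∑ x ∈ s.erase m, x :=
      (Finset.add_sum_erase s id hms).symm
    constructor
    · rw [hsum]; ring_nf; ring_nf at ihle; omega
    · intro he
      rw [hsum] at he
      have hm1 : m = n + 1 ∧ 2 * ∑ x ∈ s.erase m, x = n * (n + 1) := by
        constructor <;> [skip; skip] <;> ring_nf at he ihle ⊢ <;> omega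
      have := ihEq hm1.2
      have hins : s = insert m (s.erase m) := (Finset.insert_erase hms).symm
      rw [hins, this, hm1.1]
      ext x
      simp [Finset.mem_Icc, Finset.mem_insert]
      omega


/-- `S k`: the `r`-element subsets of `{1,…,d}` with element sum `r(r+1)/2 + k`. -/
def multiIndexSet (d r k : ℕ) : Finset (Finset ℕ) :=
  ((Finset.Icc 1 d).powersetCard r).filter
    (fun s => ∑ x ∈ s, x = r * (r + 1) / 2 + k)

lemma two_mul_tri (r k : ℕ) : 2 * (r * (r + 1) / 2 + k) = r * (r + 1) + 2 * k := by
  have h : 2 * (r * (r + 1) / 2) = r * (r + 1) :=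
    Nat.mul_div_cancel' (even_iff_two_dvd.mp (Nat.even_mul_succ_self r))
  omega

lemma mem_multiIndexSet {d r k : ℕ} {s : Finset ℕ} :
    s ∈ multiIndexSet d r k ↔ s ⊆ Icc 1 d ∧ s.card = r ∧ ∑ x ∈ s, x = r * (r + 1) / 2 + k := by
  simp [multiIndexSet, Finset.mem_filter, Finset.mem_powersetCard, and_assoc]

/-- `#S₀ = 1` and `#S_{k+1} ≤ d · #S_k`. -/
theorem multiIndexSet_card_bound (d r : ℕ) (hr1 : 1 ≤ r) (hrd : r ≤ d) :
    (multiIndexSet d r 0).card = 1 ∧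
      ∀ k : ℕ, (multiIndexSet d r (k + 1)).card ≤ d * (multiIndexSet d r k).card := by
  classical
  constructor
  · have heq : multiIndexSet d r 0 = {Icc 1 r} := by
      ext s
      rw [mem_multiIndexSet, Finset.mem_singleton]
      constructor
      · rintro ⟨hsub, hcard, hsum⟩
        have h1 : ∀ x ∈ s, 1 ≤ x := fun x hx => (Finset.mem_Icc.mp (hsub hx)).1
        refine ((sum_lb r s hcard h1).2 ?_)
        rw [hsum, two_mul_tri]
        omega
      · rintro rfl
        refine ⟨Finset.Icc_subset_Icc le_rfl hrd, by rw [Nat.card_Icc]; omega, ?_⟩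
        have := gauss r
        have h2 := two_mul_tri r 0
        omega
    rw [heq, Finset.card_singleton]
  · intro k
    -- gap existence
    have gapex : ∀ s ∈ multiIndexSet d r (k + 1), ∃ i, i ∈ s ∧ 2 ≤ i ∧ i - 1 ∉ s := by
      intro s hs
      obtain ⟨hsub, hcard, hsum⟩ := mem_multiIndexSet.mp hs
      have h1 : ∀ x ∈ s, 1 ≤ x := fun x hx => (Finset.mem_Icc.mp (hsub hx)).1
      by_contra hcon
      push_neg at hcon
      have hg : ∀ i ∈ s, i = 1 ∨ i - 1 ∈ s := by
        intro i hi
        have := h1 i hi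
        rcases Nat.lt_or_ge i 2 with h | h
        · left; omega
        · right; exact hcon i hi h
      have hIcc : s = Icc 1 r := nogap_eq_Icc r s hcard h1 hg
      have hg2 := gauss r
      rw [hIcc] at hsum
      have := two_mul_tri r (k + 1)
      omega
    set f : Finset ℕ → ℕ × Finset ℕ := fun s =>
      if h : ∃ i, i ∈ s ∧ 2 ≤ i ∧ i - 1 ∉ s then
        (h.choose, insert (h.choose - 1) (s.erase h.choose)) else (0, ∅) with hf
    have hmaps : ∀ s ∈ multiIndexSet d r (k + 1),
        f s ∈ (Icc 1 d) ×ˢ (multiIndexSet d r k) := by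
      intro s hs
      have h := gapex s hs
      obtain ⟨hsub, hcard, hsum⟩ := mem_multiIndexSet.mp hs
      obtain ⟨hi_mem, hi2, hi_gap⟩ := h.choose_spec
      set i := h.choose
      rw [hf]; simp only [dif_pos h]
      rw [Finset.mem_product]
      constructor
      · exact hsub hi_mem
      · have hnm : i - 1 ∉ s.erase i := fun hx => hi_gap (Finset.mem_of_mem_erase hx)
        have hid : i ≤ d := (Finset.mem_Icc.mp (hsub hi_mem)).2
        have hsume : ∑ x ∈ s, x = i + ∑ x ∈ s.erase i, x :=
          (Finset.add_sum_erase s id hi_mem).symm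
        refine mem_multiIndexSet.mpr ⟨?_, ?_, ?_⟩
        · intro x hx
          rcases Finset.mem_insert.mp hx with rfl | hx
          · exact Finset.mem_Icc.mpr ⟨by omega, by omega⟩
          · exact hsub (Finset.mem_of_mem_erase hx)
        · rw [Finset.card_insert_of_notMem hnm, Finset.card_erase_of_mem hi_mem, hcard]
          omega
        · rw [Finset.sum_insert hnm]
          omega
    have hinj : Set.InjOn f (multiIndexSet d r (k + 1)) := by
      intro s hs s' hs' hfe
      have h := gapex s hs
      have h' := gapex s' hs'
      rw [hf] at hfe
      simp only [dif_pos h, dif_pos h', Prod.mk.injEq] at hfe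
      obtain ⟨hie, hte⟩ := hfe
      obtain ⟨hi_mem, hi2, hi_gap⟩ := h.choose_spec
      obtain ⟨hi_mem', hi2', hi_gap'⟩ := h'.choose_spec
      have key : ∀ (t : Finset ℕ) (j : ℕ), j ∈ t → j - 1 ∉ t →
          insert j ((insert (j - 1) (t.erase j)).erase (j - 1)) = t := by
        intro t j hj hjg
        rw [Finset.erase_insert (fun hx => hjg (Finset.mem_of_mem_erase hx))]
        exact Finset.insert_erase hj
      calc s = insert h.choose ((insert (h.choose - 1) (s.erase h.choose)).erase
                (h.choose - 1)) := (key s h.choose hi_mem hi_gap).symm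
        _ = insert h'.choose ((insert (h'.choose - 1) (s'.erase h'.choose)).erase
                (h'.choose - 1)) := by rw [hte, hie]
        _ = s' := key s' h'.choose hi_mem' hi_gap'
    have := Finset.card_le_card_of_injOn f hmaps hinj
    rw [Finset.card_product, Nat.card_Icc] at this
    simpa using this
end

section
/- Let ζ₁,...,ζ_d be complex numbers with |ζ₁| > ... > |ζ_d| > 0 and |ζ_{i+1}|/|ζᵢ| < 2^{-(1+b)} for all i, where b ≥ 1 + log₂ d. Then for every 1 ≤ r ≤ d, the r-th elementary symmetric function satisfies Σ_{i₁<...<i_r} ζ_{i₁}···ζ_{i_r} = ζ₁···ζ_r · (1 + ε) with |ε| < 2^{-b}. -/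
open Finset

/-!
Put `ρ = 2^{-(1+b)}`; since `b ≥ 1`, `ρ ≤ 1/4`, and `|ζ_{i+k}| ≤ ρ^k |ζ_i|`. Splitting off the first
variable gives `e_{r+1}(ζ₁, ζ₂, …) = ζ₁ e_r(ζ₂, …) + e_{r+1}(ζ₂, …)`, where the second summand is
dominated by `ζ₂⋯ζ_{r+2}`, which is smaller than `ζ₁⋯ζ_{r+1}` by a factor `ρ^{r+1}`. Along this
recursion the majorant `H_r = 1 + 2ρ(1 - ρ^r)` satisfies `H_r + ρ^{r+1} H_{r+1} ≤ H_{r+1}` as soon as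
`ρ ≤ 1/4`, so by induction the moduli of all `r`-fold products sum to at most `H_r |ζ₁⋯ζ_r|`.
All terms but the leading one thus contribute at most `2ρ(1 - ρ^r) |ζ₁⋯ζ_r| < 2^{-b} |ζ₁⋯ζ_r|`.
-/

theorem one_add_two_mul_one_sub_pow_add_le {ρ : ℝ} (hρ0 : 0 ≤ ρ) (hρ : ρ ≤ 1 / 4) (r : ℕ) :
    (1 + 2 * ρ * (1 - ρ ^ r)) + ρ ^ (r + 1) * (1 + 2 * ρ * (1 - ρ ^ (r + 1))) ≤
      1 + 2 * ρ * (1 - ρ ^ (r + 1)) := by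
  have hx : 0 ≤ ρ ^ r := pow_nonneg hρ0 r
  rw [pow_succ]
  nlinarith [mul_nonneg (mul_nonneg hx hρ0) (sub_nonneg.mpr hρ), pow_nonneg hρ0 3,
    mul_nonneg (mul_nonneg hx hx) (pow_nonneg hρ0 3)]

namespace Multiset

variable {R : Type*}

theorem esymm_cons_succ [CommSemiring R] (a : R) (s : Multiset R) (n : ℕ) :
    (a ::ₘ s).esymm (n + 1) = a * s.esymm n + s.esymm (n + 1) := by
  simp only [esymm, powersetCard_cons, map_add, sum_add, map_map, Function.comp_def, prod_cons,
    sum_map_mul_left]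
  ring

theorem esymm_eq_zero_of_card_lt [CommSemiring R] {s : Multiset R} {n : ℕ} (h : card s < n) :
    s.esymm n = 0 := by
  simp [esymm, powersetCard_eq_empty n h]

theorem norm_esymm_le [SeminormedCommRing R] [NormOneClass R] (s : Multiset R) (n : ℕ) :
    ‖s.esymm n‖ ≤ (s.map norm).esymm n := by
  induction s using Multiset.induction_on generalizing n with
  | empty =>
    cases n with
    | zero => simp [esymm]
    | succ n =>
      rw [map_zero, esymm_eq_zero_of_card_lt (by simp), norm_zero]
      exact (esymm_eq_zero_of_card_lt (by simp)).ge
  | cons a s ih =>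
    cases n with
    | zero => simp [esymm]
    | succ n =>
      rw [map_cons, esymm_cons_succ, esymm_cons_succ]
      calc ‖a * s.esymm n + s.esymm (n + 1)‖ ≤ ‖a‖ * ‖s.esymm n‖ + ‖s.esymm (n + 1)‖ :=
            (norm_add_le _ _).trans (add_le_add_left (norm_mul_le _ _) _)
        _ ≤ _ := by gcongr; exacts [ih n, ih (n + 1)]

end Multiset

namespace List

variable {R : Type*}

theorem norm_esymm_sub_prod_take_le [SeminormedCommRing R] [NormOneClass R] (l : List R) {r : ℕ}
    (hr : r ≤ l.length) :
    ‖(l : Multiset R).esymm r - (l.take r).prod‖ ≤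
      ((l.map norm : List ℝ) : Multiset ℝ).esymm r - ((l.map norm).take r).prod := by
  induction l generalizing r with
  | nil =>
    obtain rfl : r = 0 := Nat.le_zero.mp hr
    simp [Multiset.esymm]
  | cons a l ih =>
    cases r with
    | zero => simp [Multiset.esymm]
    | succ r =>
      rw [map_cons, ← Multiset.cons_coe, ← Multiset.cons_coe, Multiset.esymm_cons_succ,
        Multiset.esymm_cons_succ, take_succ_cons, take_succ_cons, prod_cons, prod_cons]
      have h := ih (Nat.le_of_succ_le_succ hr)
      calc ‖a * (l : Multiset R).esymm r + (l : Multiset R).esymm (r + 1) - a * (take r l).prod‖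
          ≤ ‖a‖ * ‖(l : Multiset R).esymm r - (take r l).prod‖
              + ‖(l : Multiset R).esymm (r + 1)‖ := by
            rw [add_sub_right_comm, ← mul_sub]
            exact (norm_add_le _ _).trans (add_le_add_left (norm_mul_le _ _) _)
        _ ≤ _ := by
            have := Multiset.norm_esymm_le (l : Multiset R) (r + 1)
            rw [Multiset.map_coe] at this
            nlinarith [norm_nonneg a]

theorem getElem_le_pow_mul_of_isChain_cons {ρ : ℝ} (hρ : 0 ≤ ρ) {a : ℝ} {l : List ℝ}
    (hl : (a :: l).IsChain (fun x y => y ≤ ρ * x)) (i : ℕ) (hi : i < l.length) :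
    l[i] ≤ ρ ^ (i + 1) * a := by
  induction i generalizing a l with
  | zero =>
    obtain ⟨b, l, rfl⟩ := exists_cons_of_length_pos hi
    simpa using (isChain_cons_cons.mp hl).1
  | succ i ih =>
    obtain ⟨b, l, rfl⟩ := exists_cons_of_length_pos (Nat.zero_lt_of_lt hi)
    obtain ⟨hab, hl⟩ := isChain_cons_cons.mp hl
    calc (b :: l)[i + 1] ≤ ρ ^ (i + 1) * b := ih hl (Nat.lt_of_succ_lt_succ hi)
      _ ≤ ρ ^ (i + 1) * (ρ * a) := by gcongr
      _ = ρ ^ (i + 1 + 1) * a := by ring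

theorem esymm_le_mul_prod_take_of_isChain {ρ : ℝ} (hρ0 : 0 ≤ ρ) (hρ : ρ ≤ 1 / 4) {l : List ℝ}
    (hl0 : ∀ x ∈ l, 0 ≤ x) (hl : l.IsChain (fun x y => y ≤ ρ * x)) (r : ℕ) :
    (l : Multiset ℝ).esymm r ≤ (1 + 2 * ρ * (1 - ρ ^ r)) * (l.take r).prod := by
  have hH : ∀ n : ℕ, 0 ≤ 1 + 2 * ρ * (1 - ρ ^ n) := fun n => by
    nlinarith [pow_le_one₀ hρ0 (by linarith : ρ ≤ 1) (n := n)]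
  induction l generalizing r with
  | nil =>
    cases r with
    | zero => simp [Multiset.esymm]
    | succ r =>
      rw [Multiset.esymm_eq_zero_of_card_lt (by simp)]
      simpa using hH (r + 1)
  | cons a l ih =>
    have ha : 0 ≤ a := hl0 a mem_cons_self
    have ih := ih (fun x hx => hl0 x (mem_cons_of_mem a hx)) hl.tail
    cases r with
    | zero => simp [Multiset.esymm]
    | succ r =>
      rw [← Multiset.cons_coe, Multiset.esymm_cons_succ, take_succ_cons, prod_cons]
      have hπ : 0 ≤ (l.take r).prod :=
        prod_nonneg fun x hx => hl0 x (mem_cons_of_mem a (mem_of_mem_take hx))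
      have htail : (l : Multiset ℝ).esymm (r + 1) ≤
          ρ ^ (r + 1) * (1 + 2 * ρ * (1 - ρ ^ (r + 1))) * (a * (l.take r).prod) := by
        rcases lt_or_ge r l.length with hr | hr
        · calc (l : Multiset ℝ).esymm (r + 1)
              ≤ (1 + 2 * ρ * (1 - ρ ^ (r + 1))) * ((l.take r).prod * l[r]) := by
                have := ih (r + 1)
                rwa [take_add_one, getElem?_eq_getElem hr, Option.toList_some, prod_append,
                  prod_singleton] at this
            _ ≤ (1 + 2 * ρ * (1 - ρ ^ (r + 1))) * ((l.take r).prod * (ρ ^ (r + 1) * a)) := by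
                gcongr
                · exact hH _
                · exact getElem_le_pow_mul_of_isChain_cons hρ0 hl r hr
            _ = _ := by ring
        · rw [Multiset.esymm_eq_zero_of_card_lt (by simpa using Nat.lt_succ_of_le hr)]
          have := hH (r + 1)
          positivity
      calc a * (l : Multiset ℝ).esymm r + (l : Multiset ℝ).esymm (r + 1)
          ≤ a * ((1 + 2 * ρ * (1 - ρ ^ r)) * (l.take r).prod) +
              ρ ^ (r + 1) * (1 + 2 * ρ * (1 - ρ ^ (r + 1))) * (a * (l.take r).prod) := by
            gcongr
            exact ih r
        _ ≤ (1 + 2 * ρ * (1 - ρ ^ (r + 1))) * (a * (l.take r).prod) := by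
            nlinarith [one_add_two_mul_one_sub_pow_add_le hρ0 hρ r, mul_nonneg ha hπ]

theorem norm_esymm_sub_prod_take_le_of_isChain [NormedCommRing R] [NormOneClass R]
    [NormMulClass R] {ρ : ℝ} (hρ0 : 0 ≤ ρ) (hρ : ρ ≤ 1 / 4) {l : List R}
    (hl : (l.map norm).IsChain (fun x y => y ≤ ρ * x)) {r : ℕ} (hr : r ≤ l.length) :
    ‖(l : Multiset R).esymm r - (l.take r).prod‖ ≤ 2 * ρ * (1 - ρ ^ r) * ‖(l.take r).prod‖ := by
  have hE := esymm_le_mul_prod_take_of_isChain hρ0 hρ (by simp) hl r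
  rw [List.norm_prod, map_take]
  linarith [norm_esymm_sub_prod_take_le l hr]

end List

theorem elementary_symmetric_dominant_general (d : ℕ) (b : ℝ)
    (hb : b ≥ 1 + Real.logb 2 d) (ζ : Fin d → ℂ)
    (hpos : ∀ i, 0 < ‖ζ i‖)
    (hratio : ∀ i j : Fin d, (i : ℕ) + 1 = (j : ℕ) →
      ‖ζ j‖ / ‖ζ i‖ < (2 : ℝ) ^ (-(1 + b)))
    (r : ℕ) (hrd : r ≤ d) :
    ∃ ε : ℂ, ‖ε‖ < (2 : ℝ) ^ (-b) ∧
      ∑ s ∈ Finset.univ.powersetCard r, ∏ i ∈ s, ζ i =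
        (∏ t : Fin r, ζ ⟨t, lt_of_lt_of_le t.isLt hrd⟩) * (1 + ε) := by
  set ρ : ℝ := 2 ^ (-(1 + b))
  have hρ0 : 0 < ρ := by positivity
  have hρ : ρ ≤ 1 / 4 := by
    have : 0 ≤ Real.logb 2 d := div_nonneg (Real.log_natCast_nonneg d) (Real.log_nonneg one_le_two)
    calc ρ ≤ (2 : ℝ) ^ (-2 : ℝ) := Real.rpow_le_rpow_of_exponent_le one_le_two (by linarith)
      _ = 1 / 4 := by norm_num [Real.rpow_neg, Real.rpow_two]
  have h2b : (2 : ℝ) ^ (-b) = 2 * ρ := by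
    rw [show -b = 1 + -(1 + b) by ring, Real.rpow_add two_pos, Real.rpow_one]
  have hchain : ((List.ofFn ζ).map norm).IsChain (fun x y => y ≤ ρ * x) := by
    rw [List.map_ofFn, List.isChain_ofFn]
    exact fun i hi => ((div_lt_iff₀ (hpos _)).mp (hratio _ _ rfl)).le
  have hP : ∏ t : Fin r, ζ ⟨t, lt_of_lt_of_le t.isLt hrd⟩ = ((List.ofFn ζ).take r).prod := by
    rw [← Fin.ofFn_take_eq_take_ofFn hrd, List.prod_ofFn]
    rfl
  have hP0 : 0 < ‖((List.ofFn ζ).take r).prod‖ := by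
    rw [← hP, norm_prod]
    exact Finset.prod_pos fun t _ => hpos _
  have hbound := List.norm_esymm_sub_prod_take_le_of_isChain hρ0.le hρ hchain
    (r := r) (by simpa using hrd)
  refine ⟨(List.ofFn ζ : Multiset ℂ).esymm r / ((List.ofFn ζ).take r).prod - 1, ?_, ?_⟩
  · rw [div_sub_one (norm_pos_iff.mp hP0), norm_div, div_lt_iff₀ hP0, h2b]
    have : 0 < ρ ^ r * ‖((List.ofFn ζ).take r).prod‖ := by positivity
    nlinarith
  · rw [← Finset.esymm_map_val, Fin.univ_val_map, hP]
    rw [add_sub_cancel, mul_div_cancel₀ _ (norm_pos_iff.mp hP0)]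

/-- If `|ζ₁| > ⋯ > |ζ_d| > 0` with consecutive ratios below `2^{-(1+b)}` and
`b ≥ 1 + log₂ d`, then the `r`-th elementary symmetric function equals
`ζ₁⋯ζ_r (1 + ε)` with `|ε| < 2^{-b}`. -/
theorem elementary_symmetric_dominant (d : ℕ) (b : ℝ)
    (hb : b ≥ 1 + Real.logb 2 d) (ζ : Fin d → ℂ)
    (hpos : ∀ i, 0 < ‖ζ i‖)
    (hratio : ∀ i j : Fin d, (i : ℕ) + 1 = (j : ℕ) →
      ‖ζ j‖ / ‖ζ i‖ < (2 : ℝ) ^ (-(1 + b)))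
    (r : ℕ) (hr1 : 1 ≤ r) (hrd : r ≤ d) :
    ∃ ε : ℂ, ‖ε‖ < (2 : ℝ) ^ (-b) ∧
      ∑ s ∈ Finset.univ.powersetCard r, ∏ i ∈ s, ζ i =
        (∏ t : Fin r, ζ ⟨t, lt_of_lt_of_le t.isLt hrd⟩) * (1 + ε) :=
  elementary_symmetric_dominant_general d b hb ζ hpos hratio r hrd
end

section
/- Renormalized representation of the Graeffe coefficients: let f be a monic degree-d complex polynomial with nonzero roots ζ₁,...,ζ_d of pairwise distinct moduli, ordered |ζ₁| > ... > |ζ_d|. Let a_i^{(k)} denote the coefficient of x^i in the k-th Graeffe iterate G^k f (whose roots are ζ_j^{2^k}). Then for each 0 ≤ i ≤ d, the renormalized quantity 2^{-k} log|a_i^{(k)}| converges as k → ∞ to h_i := Σ_{j=1}^{d-i} log|ζ_j|; consequently, lim_k 2^{-k} log|a_{i-1}^{(k)}| - lim_k 2^{-k} log|a_i^{(k)}| = log|ζ_{d-i+1}|. -/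
/-!
By Vieta, `|a_i^{(k)}| = |∑_{|t| = d-i} (∏_{j ∈ t} ζⱼ)^{2^k}|`. Because the moduli are distinct,
the product over the `d - i` roots of largest modulus strictly dominates every other product in
this sum, so after factoring out its `2^k`-th power the remaining terms decay geometrically and
`2^{-k} log |a_i^{(k)}|` tends to the logarithm of its modulus, which is `h_i`.
-/

open Polynomial Filter Finset Topology

theorem Finset.prod_X_sub_C_coeff {R σ : Type*} [CommRing R] (s : Finset σ) (r : σ → R) {k : ℕ}
    (h : k ≤ #s) :
    (∏ i ∈ s, (X - C (r i))).coeff k =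
      (-1) ^ (#s - k) * ∑ t ∈ s.powersetCard (#s - k), ∏ i ∈ t, r i := by
  simp_rw [sub_eq_add_neg, ← map_neg C]
  rw [Finset.prod_X_add_C_coeff s _ h, Finset.mul_sum]
  refine Finset.sum_congr rfl fun t ht => ?_
  rw [Finset.prod_neg, (Finset.mem_powersetCard.mp ht).2]

theorem Finset.prod_lt_prod_of_card_eq_of_forall_lt {ι R : Type*} [CommSemiring R] [LinearOrder R]
    [IsStrictOrderedRing R] {s t : Finset ι} {f : ι → R} (hf : ∀ i ∈ s, 0 < f i)
    (hcard : #s = #t) (hs : s.Nonempty) (hlt : ∀ i ∈ s, ∀ j ∈ t, f i < f j) :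
    ∏ i ∈ s, f i < ∏ j ∈ t, f j := by
  obtain ⟨a, ha, hmax⟩ := s.exists_max_image f hs
  calc ∏ i ∈ s, f i ≤ ∏ _i ∈ s, f a := prod_le_prod (fun i hi => (hf i hi).le) hmax
    _ = ∏ _j ∈ t, f a := by rw [prod_const, prod_const, hcard]
    _ < ∏ j ∈ t, f j :=
        prod_lt_prod_of_nonempty (fun _ _ => hf a ha) (hlt a ha)
          (card_pos.mp (hcard ▸ card_pos.mpr hs))

theorem Finset.prod_lt_prod_of_card_eq_of_forall_notMem_lt {ι R : Type*} [DecidableEq ι]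
    [CommSemiring R] [LinearOrder R] [IsStrictOrderedRing R] {s t : Finset ι} {f : ι → R}
    (hf : ∀ i, 0 < f i) (hcard : #t = #s) (hne : t ≠ s) (htop : ∀ i ∈ s, ∀ j ∉ s, f j < f i) :
    ∏ i ∈ t, f i < ∏ i ∈ s, f i := by
  rw [← prod_inter_mul_prod_sdiff t s, ← prod_inter_mul_prod_sdiff s t, inter_comm]
  refine mul_lt_mul_of_pos_left (prod_lt_prod_of_card_eq_of_forall_lt (fun i _ => hf i)
    (card_sdiff_comm hcard) ?_ ?_) (prod_pos fun i _ => hf i)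
  · exact sdiff_nonempty.mpr fun hts => hne (eq_of_subset_of_card_le hts hcard.ge)
  · intro i hi j hj
    exact htop j (mem_sdiff.mp hj).1 i (mem_sdiff.mp hi).2

theorem Fin.prod_lt_prod_filter_val_lt {R : Type*} [CommSemiring R] [LinearOrder R]
    [IsStrictOrderedRing R] {d m : ℕ} {g : Fin d → R} (hg : ∀ j, 0 < g j) (hanti : StrictAnti g)
    {t : Finset (Fin d)} (hcard : #t = m) (hne : t ≠ univ.filter (fun j : Fin d => (j : ℕ) < m)) :
    ∏ j ∈ t, g j < ∏ j ∈ univ.filter (fun j : Fin d => (j : ℕ) < m), g j := by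
  have hmd : m ≤ d := hcard ▸ card_le_univ t |>.trans_eq (Fintype.card_fin d)
  refine prod_lt_prod_of_card_eq_of_forall_notMem_lt hg ?_ hne fun i hi j hj => hanti ?_
  · rw [Fin.card_filter_val_lt, hcard, min_eq_right hmd]
  · simp only [mem_filter, mem_univ, true_and, not_lt] at hi hj
    exact Fin.lt_def.mpr (hi.trans_le hj)

theorem tendsto_sum_div_pow_of_norm_lt {𝕜 ι : Type*} [NormedField 𝕜] {s : Finset ι} {x : ι → 𝕜}
    {i₀ : ι} (hi₀ : i₀ ∈ s) (hx₀ : x i₀ ≠ 0) (hdom : ∀ i ∈ s, i ≠ i₀ → ‖x i‖ < ‖x i₀‖) :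
    Tendsto (fun n : ℕ => ∑ i ∈ s, (x i / x i₀) ^ n) atTop (𝓝 1) := by
  classical
  have hterm : ∀ i ∈ s, Tendsto (fun n : ℕ => (x i / x i₀) ^ n) atTop
      (𝓝 (if i = i₀ then 1 else 0)) := by
    intro i hi
    split_ifs with h
    · simp [h, div_self hx₀]
    · refine tendsto_pow_atTop_nhds_zero_of_norm_lt_one ?_
      rw [norm_div, div_lt_one (norm_pos_iff.mpr hx₀)]
      exact hdom i hi h
  simpa [hi₀] using tendsto_finsetSum s hterm

theorem tendsto_log_norm_sum_pow_div {𝕜 ι : Type*} [NormedField 𝕜] {s : Finset ι} {x : ι → 𝕜}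
    {i₀ : ι} (hi₀ : i₀ ∈ s) (hx₀ : x i₀ ≠ 0) (hdom : ∀ i ∈ s, i ≠ i₀ → ‖x i‖ < ‖x i₀‖) :
    Tendsto (fun n : ℕ => Real.log ‖∑ i ∈ s, x i ^ n‖ / n) atTop (𝓝 (Real.log ‖x i₀‖)) := by
  set r : ℕ → 𝕜 := fun n => ∑ i ∈ s, (x i / x i₀) ^ n
  have hr : Tendsto r atTop (𝓝 1) := tendsto_sum_div_pow_of_norm_lt hi₀ hx₀ hdom
  have hsum : ∀ n : ℕ, ∑ i ∈ s, x i ^ n = x i₀ ^ n * r n := fun n => by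
    simp only [r, mul_sum, div_pow, mul_div_cancel₀ _ (pow_ne_zero n hx₀)]
  have hlog : ∀ᶠ n : ℕ in atTop,
      Real.log ‖x i₀‖ + Real.log ‖r n‖ / n = Real.log ‖∑ i ∈ s, x i ^ n‖ / n := by
    filter_upwards [hr.eventually_ne one_ne_zero, eventually_ne_atTop 0] with n hrn hn
    rw [hsum, norm_mul, norm_pow, Real.log_mul (by positivity) (norm_ne_zero_iff.mpr hrn),
      Real.log_pow, add_div, mul_div_cancel_left₀ _ (Nat.cast_ne_zero.mpr hn)]
  have hlog_r : Tendsto (fun n => Real.log ‖r n‖) atTop (𝓝 0) := by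
    simpa using (hr.norm.log (by simp))
  simpa using (tendsto_const_nhds.add (hlog_r.div_atTop tendsto_natCast_atTop_atTop)).congr' hlog

theorem Fin.sum_filter_val_lt_succ {M : Type*} [AddCommMonoid M] {d m : ℕ} (hm : m < d)
    (f : Fin d → M) :
    ∑ j ∈ univ.filter (fun j : Fin d => (j : ℕ) < m + 1), f j =
      f ⟨m, hm⟩ + ∑ j ∈ univ.filter (fun j : Fin d => (j : ℕ) < m), f j := by
  rw [← sum_insert (by simp)]
  congr 1
  ext j
  simp only [mem_filter, mem_univ, true_and, mem_insert, Fin.ext_iff]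
  omega

/-- Renormalized convergence of the Graeffe coefficients: if
`f = ∏ (x - ζⱼ)` has roots of pairwise distinct nonzero moduli ordered
decreasingly, and `a_i^{(k)}` is the `i`-th coefficient of the `k`-th
Graeffe iterate (whose roots are `ζⱼ^{2^k}`), then
`2^{-k} log |a_i^{(k)}| → h_i = ∑_{j=1}^{d-i} log |ζⱼ|`, and consequently
`lim 2^{-k} log|a_{i-1}^{(k)}| - lim 2^{-k} log|a_i^{(k)}| = log |ζ_{d-i+1}|`. -/
theorem renormalized_graeffe_coeff_tendsto (d : ℕ) (ζ : Fin d → ℂ)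
    (hpos : ∀ j, 0 < ‖ζ j‖)
    (hanti : ∀ i j : Fin d, i < j → ‖ζ j‖ < ‖ζ i‖)
    (h : ℕ → ℝ)
    (hh : ∀ i, h i = ∑ j ∈ Finset.univ.filter (fun j : Fin d => (j : ℕ) < d - i),
      Real.log (‖ζ j‖)) :
    (∀ i ≤ d,
      Tendsto (fun k : ℕ => (2 : ℝ) ^ (-(k : ℝ)) *
          Real.log ‖
            ((∏ j, (X - C (ζ j ^ (2 ^ k)))).coeff i)‖)
        atTop (nhds (h i))) ∧
    (∀ (i : ℕ) (h1 : 1 ≤ i) (h2 : i ≤ d),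
      h (i - 1) - h i = Real.log (‖ζ ⟨d - i, by omega⟩‖)) := by
  refine ⟨fun i hi => ?_, fun i h1 h2 => ?_⟩
  · set t₀ := univ.filter (fun j : Fin d => (j : ℕ) < d - i)
    have ht₀ : t₀ ∈ powersetCard (d - i) univ :=
      mem_powersetCard.mpr ⟨subset_univ _, by simp [t₀, Fin.card_filter_val_lt]⟩
    have hdom : ∀ t ∈ powersetCard (d - i) univ, t ≠ t₀ →
        ‖∏ j ∈ t, ζ j‖ < ‖∏ j ∈ t₀, ζ j‖ := fun t ht hne => by
      simpa only [norm_prod] using Fin.prod_lt_prod_filter_val_lt hpos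
        (fun a b hab => hanti a b hab) (mem_powersetCard.mp ht).2 hne
    have hlimit : Real.log ‖∏ j ∈ t₀, ζ j‖ = h i := by
      rw [hh, norm_prod, Real.log_prod fun j _ => (hpos j).ne']
    rw [← hlimit]
    refine ((tendsto_log_norm_sum_pow_div ht₀ (prod_ne_zero_iff.mpr fun j _ =>
      norm_pos_iff.mp (hpos j)) hdom).comp
      (tendsto_pow_atTop_atTop_of_one_lt one_lt_two)).congr fun k => ?_
    rw [Finset.prod_X_sub_C_coeff _ _ (by simpa), card_univ, Fintype.card_fin, norm_mul, norm_pow,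
      norm_neg, norm_one, one_pow, one_mul, Real.rpow_neg zero_le_two, Real.rpow_natCast,
      inv_mul_eq_div]
    simp [prod_pow]
  · rw [hh, hh, show d - (i - 1) = d - i + 1 by omega, Fin.sum_filter_val_lt_succ (by omega)]
    ring
end
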